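/- Let x̄ ∈ ℝⁿ (n = N·D) be a block-sparse signal with block support T (x̄ₖ = 0 for k ∉ T), let A ∈ ℝ^{m×n} have full row rank, and let α > 0 satisfy 1/α < ‖x̄ₖ‖ for all k ∈ T. Set d = min_{k∈T} min(1/α, ‖x̄ₖ‖ − 1/α), let y = A x̄ + v, and L = {x : A x = y}. If x̂ minimizes J(x) = Σ_{k=1}^{N} F_α(‖xₖ‖) over L ∩ B(x̄, d), then the off-support deviation satisfies ‖x̂_{T^c} − x̄_{T^c}‖ ≤ 2√N ‖A† v‖. -/

import Mathlib

open scoped BigOperators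
open Matrix

noncomputable section

/-- The Euclidean (`ℓ₂`) norm of a finitely-indexed real vector. -/
def l2norm {ι : Type*} [Fintype ι] (x : ι → ℝ) : ℝ :=
  Real.sqrt (∑ i, (x i) ^ 2)

/-- The `ℓ₂` operator norm of a real matrix. -/
def l2opNorm {ι κ : Type*} [Fintype ι] [Fintype κ] [DecidableEq κ] (M : Matrix ι κ ℝ) : ℝ :=
  ‖LinearMap.toContinuousLinearMap (Matrix.toEuclideanLin M)‖

/-- The approximation `F_α` to the indicator of nonzeroness. -/
def Fa (α w : ℝ) : ℝ :=
  if |w| ≤ 1 / α then 2 * α * |w| - α ^ 2 * w ^ 2 else 1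

/-- The `k`-th block (of length `D`) of a block vector. -/
def blk {N D : ℕ} (x : Fin N × Fin D → ℝ) (k : Fin N) : Fin D → ℝ :=
  fun j => x (k, j)

/-- The cost function `J(x) = ∑ₖ F_α(‖xₖ‖)`. -/
def J {N D : ℕ} (α : ℝ) (x : Fin N × Fin D → ℝ) : ℝ :=
  ∑ k, Fa α (l2norm (blk x k))

/-- Pseudo-inverse `A† = Aᵀ (A Aᵀ)⁻¹` of a full-row-rank matrix. -/
def pinvR {ι κ : Type*} [Fintype ι] [Fintype κ] [DecidableEq ι] (A : Matrix ι κ ℝ) :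
    Matrix κ ι ℝ :=
  Aᵀ * (A * Aᵀ)⁻¹

/-- Pseudo-inverse `A† = (Aᵀ A)⁻¹ Aᵀ` of a full-column-rank matrix. -/
def pinvC {ι κ : Type*} [Fintype ι] [Fintype κ] [DecidableEq κ] (A : Matrix ι κ ℝ) :
    Matrix κ ι ℝ :=
  (Aᵀ * A)⁻¹ * Aᵀ

/-- The submatrix `A_T` formed by the column blocks of `A` indexed by `T`. -/
def subCols {ι : Type*} {N D : ℕ} (A : Matrix ι (Fin N × Fin D) ℝ) (T : Finset (Fin N)) :
    Matrix ι (↥T × Fin D) ℝ :=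
  A.submatrix id (fun p => ((p.1 : Fin N), p.2))

/-- The subvector `x_T` formed by the blocks of `x` indexed by `T`. -/
def subVec {N D : ℕ} (x : Fin N × Fin D → ℝ) (T : Finset (Fin N)) : ↥T × Fin D → ℝ :=
  fun p => x ((p.1 : Fin N), p.2)

/-! On the support `T` each block of `x̂` stays at distance at most `d` from `x̄ₖ`, hence has norm
at least `1/α`, where `F_α` saturates at `1`; off `T` the blocks of `x̂ - x̄` have norm at most
`d ≤ 1/α`, where `F_α(w) ≥ α w`. Comparing `J(x̂)` with `J(x̄ + A† v)`, a feasible competitor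
whenever `‖A† v‖ ≤ d`, and using `F_α(w) ≤ 2 α w` gives
`∑_{k ∉ T} ‖x̂ₖ - x̄ₖ‖ ≤ 2 ∑_{k ∉ T} ‖(A† v)ₖ‖ ≤ 2 √N ‖A† v‖`. If instead `‖A† v‖ > d`,
the ball constraint alone gives the bound. -/

theorem Matrix.isUnit_of_rank_eq_card {n K : Type*} [Fintype n] [DecidableEq n] [Field K]
    {M : Matrix n n K} (hM : M.rank = Fintype.card n) : IsUnit M := by
  rw [← mulVec_surjective_iff_isUnit]
  refine (LinearMap.range_eq_top (f := M.mulVecLin)).1 (Submodule.eq_top_of_finrank_eq ?_)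
  rw [← rank, hM, Module.finrank_fintype_fun_eq_card]

theorem Matrix.mul_pinvR {ι κ : Type*} [Fintype ι] [Fintype κ] [DecidableEq ι]
    {A : Matrix ι κ ℝ} (hA : A.rank = Fintype.card ι) : A * pinvR A = 1 := by
  have hunit : IsUnit (A * Aᵀ) := isUnit_of_rank_eq_card (by rw [rank_self_mul_transpose, hA])
  rw [pinvR, ← Matrix.mul_assoc, mul_nonsing_inv _ ((isUnit_iff_isUnit_det _).1 hunit)]

section l2norm

variable {ι : Type*} [Fintype ι]

theorem l2norm_eq_norm (x : ι → ℝ) : l2norm x = ‖WithLp.toLp 2 x‖ := by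
  simp [l2norm, EuclideanSpace.norm_eq]

theorem l2norm_nonneg (x : ι → ℝ) : 0 ≤ l2norm x := Real.sqrt_nonneg _

@[simp]
theorem abs_l2norm (x : ι → ℝ) : |l2norm x| = l2norm x := abs_of_nonneg (l2norm_nonneg x)

theorem sq_l2norm (x : ι → ℝ) : l2norm x ^ 2 = ∑ i, x i ^ 2 :=
  Real.sq_sqrt (by positivity)

theorem l2norm_le_l2norm_add_l2norm_sub (x y : ι → ℝ) :
    l2norm y ≤ l2norm x + l2norm (x - y) := by
  simpa only [l2norm_eq_norm, WithLp.toLp_sub] using norm_le_norm_add_norm_sub _ _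

end l2norm

section Blocks

variable {N D : ℕ}

theorem blk_sub (x y : Fin N × Fin D → ℝ) (k : Fin N) : blk (x - y) k = blk x k - blk y k := rfl

theorem blk_add (x y : Fin N × Fin D → ℝ) (k : Fin N) : blk (x + y) k = blk x k + blk y k := rfl

theorem sum_sq_l2norm_blk (x : Fin N × Fin D → ℝ) :
    ∑ k, l2norm (blk x k) ^ 2 = l2norm x ^ 2 := by
  simp only [sq_l2norm, Fintype.sum_prod_type, blk]

theorem l2norm_blk_le (x : Fin N × Fin D → ℝ) (k : Fin N) : l2norm (blk x k) ≤ l2norm x := by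
  refine (pow_le_pow_iff_left₀ (l2norm_nonneg _) (l2norm_nonneg _) two_ne_zero).1 ?_
  rw [← sum_sq_l2norm_blk x]
  exact Finset.single_le_sum (f := fun k => l2norm (blk x k) ^ 2) (fun _ _ => sq_nonneg _)
    (Finset.mem_univ k)

theorem l2norm_subVec_le_sum (x : Fin N × Fin D → ℝ) (S : Finset (Fin N)) :
    l2norm (subVec x S) ≤ ∑ k ∈ S, l2norm (blk x k) := by
  have hsq : l2norm (subVec x S) ^ 2 = ∑ k ∈ S, l2norm (blk x k) ^ 2 := by
    rw [sq_l2norm, Fintype.sum_prod_type, ← Finset.sum_coe_sort S]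
    simp only [sq_l2norm, subVec, blk]
  have hsum : 0 ≤ ∑ k ∈ S, l2norm (blk x k) := Finset.sum_nonneg fun _ _ => l2norm_nonneg _
  refine (pow_le_pow_iff_left₀ (l2norm_nonneg _) hsum two_ne_zero).1 ?_
  rw [hsq]
  exact Finset.sum_sq_le_sq_sum_of_nonneg fun _ _ => l2norm_nonneg _

theorem sum_l2norm_blk_le (x : Fin N × Fin D → ℝ) (S : Finset (Fin N)) :
    ∑ k ∈ S, l2norm (blk x k) ≤ √N * l2norm x := by
  have hS : ∑ k ∈ S, l2norm (blk x k) ≤ ∑ k, l2norm (blk x k) :=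
    Finset.sum_le_sum_of_subset_of_nonneg (Finset.subset_univ S) fun k _ _ => l2norm_nonneg _
  have hCS : (∑ k, l2norm (blk x k)) ^ 2 ≤ N * l2norm x ^ 2 := by
    simpa [sum_sq_l2norm_blk] using
      sq_sum_le_card_mul_sum_sq (s := Finset.univ) (f := fun k => l2norm (blk x k))
  have hsum : 0 ≤ ∑ k, l2norm (blk x k) := Finset.sum_nonneg fun _ _ => l2norm_nonneg _
  refine hS.trans ((pow_le_pow_iff_left₀ hsum (mul_nonneg (Real.sqrt_nonneg _) (l2norm_nonneg _))
    two_ne_zero).1 ?_)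
  rwa [mul_pow, Real.sq_sqrt N.cast_nonneg]

end Blocks

section Fa

variable {α : ℝ}

theorem Fa_le_one (α w : ℝ) : Fa α w ≤ 1 := by
  unfold Fa
  split_ifs
  · nlinarith [sq_nonneg (1 - α * |w|), sq_abs w]
  · rfl

theorem Fa_eq_one (hα : 0 < α) {w : ℝ} (hw : 1 / α ≤ |w|) : Fa α w = 1 := by
  unfold Fa
  split_ifs with h
  · rw [← sq_abs w, le_antisymm h hw]
    field_simp
    ring
  · rfl

theorem mul_abs_le_Fa (hα : 0 < α) {w : ℝ} (hw : |w| ≤ 1 / α) : α * |w| ≤ Fa α w := by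
  have hαw : α * |w| ≤ 1 := by rwa [le_div_iff₀' hα] at hw
  rw [Fa, if_pos hw, ← sq_abs w]
  nlinarith [mul_nonneg (mul_nonneg hα.le (abs_nonneg w)) (sub_nonneg.2 hαw)]

theorem Fa_le_two_mul_abs (hα : 0 < α) (w : ℝ) : Fa α w ≤ 2 * α * |w| := by
  unfold Fa
  split_ifs with h
  · nlinarith [sq_nonneg (α * w)]
  · have : 1 < α * |w| := by rwa [not_le, div_lt_iff₀' hα] at h
    linarith

end Fa

section J

variable {N D : ℕ} {α : ℝ}

theorem card_add_mul_sum_le_J (hα : 0 < α) {x : Fin N × Fin D → ℝ} {T : Finset (Fin N)}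
    (hT : ∀ k ∈ T, 1 / α ≤ l2norm (blk x k)) (hTc : ∀ k ∉ T, l2norm (blk x k) ≤ 1 / α) :
    T.card + α * ∑ k ∈ Tᶜ, l2norm (blk x k) ≤ J α x := by
  rw [_root_.J, ← Finset.sum_add_sum_compl T, Finset.mul_sum, Finset.card_eq_sum_ones,
    Nat.cast_sum]
  refine add_le_add (Finset.sum_le_sum fun k hk => ?_) (Finset.sum_le_sum fun k hk => ?_)
  · rw [Fa_eq_one hα (by simpa using hT k hk), Nat.cast_one]
  · simpa using mul_abs_le_Fa hα (w := l2norm (blk x k))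
      (by simpa using hTc k (Finset.mem_compl.1 hk))

theorem J_le_card_add_mul_sum (hα : 0 < α) (x : Fin N × Fin D → ℝ) (T : Finset (Fin N)) :
    J α x ≤ T.card + 2 * α * ∑ k ∈ Tᶜ, l2norm (blk x k) := by
  rw [_root_.J, ← Finset.sum_add_sum_compl T, Finset.mul_sum, Finset.card_eq_sum_ones,
    Nat.cast_sum]
  refine add_le_add (Finset.sum_le_sum fun k _ => ?_) (Finset.sum_le_sum fun k _ => ?_)
  · simpa using Fa_le_one α _
  · simpa using Fa_le_two_mul_abs hα (l2norm (blk x k))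

theorem sum_compl_le_two_mul_of_J_le (hα : 0 < α) {x y : Fin N × Fin D → ℝ}
    {T : Finset (Fin N)} (hT : ∀ k ∈ T, 1 / α ≤ l2norm (blk x k))
    (hTc : ∀ k ∉ T, l2norm (blk x k) ≤ 1 / α) (hJ : J α x ≤ J α y) :
    ∑ k ∈ Tᶜ, l2norm (blk x k) ≤ 2 * ∑ k ∈ Tᶜ, l2norm (blk y k) := by
  have := (card_add_mul_sum_le_J hα hT hTc).trans (hJ.trans (J_le_card_add_mul_sum hα y T))
  nlinarith

theorem sum_compl_blk_sub_le_of_J_le (hα : 0 < α) {xbar xhat e : Fin N × Fin D → ℝ}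
    {T : Finset (Fin N)} (hsupp : ∀ k ∉ T, blk xbar k = 0)
    (hT : ∀ k ∈ T, 1 / α ≤ l2norm (blk xhat k))
    (hTc : ∀ k ∉ T, l2norm (blk (xhat - xbar) k) ≤ 1 / α) (hJ : J α xhat ≤ J α (xbar + e)) :
    ∑ k ∈ Tᶜ, l2norm (blk (xhat - xbar) k) ≤ 2 * ∑ k ∈ Tᶜ, l2norm (blk e k) := by
  have hsub (k : Fin N) (hk : k ∉ T) : blk (xhat - xbar) k = blk xhat k := by
    rw [blk_sub, hsupp k hk, sub_zero]
  have hadd (k : Fin N) (hk : k ∉ T) : blk (xbar + e) k = blk e k := by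
    rw [blk_add, hsupp k hk, zero_add]
  calc ∑ k ∈ Tᶜ, l2norm (blk (xhat - xbar) k) = ∑ k ∈ Tᶜ, l2norm (blk xhat k) :=
        Finset.sum_congr rfl fun k hk => by rw [hsub k (Finset.mem_compl.1 hk)]
    _ ≤ 2 * ∑ k ∈ Tᶜ, l2norm (blk (xbar + e) k) :=
        sum_compl_le_two_mul_of_J_le hα hT (fun k hk => hsub k hk ▸ hTc k hk) hJ
    _ = 2 * ∑ k ∈ Tᶜ, l2norm (blk e k) := by
        rw [Finset.sum_congr rfl fun k hk => by rw [hadd k (Finset.mem_compl.1 hk)]]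

end J

theorem offsupport_deviation_general {m N D : ℕ} (A : Matrix (Fin m) (Fin N × Fin D) ℝ)
    (xbar xhat : Fin N × Fin D → ℝ) (v : Fin m → ℝ) (T : Finset (Fin N)) (hT : T.Nonempty)
    (α : ℝ) (hα : 0 < α)
    (hsupp : ∀ k ∉ T, blk xbar k = 0)
    (hrow : A.rank = m)
    (d : ℝ) (hd : d = T.inf' hT fun k => min (1 / α) (l2norm (blk xbar k) - 1 / α))
    (hball : l2norm (xhat - xbar) ≤ d)
    (hmin : ∀ x : Fin N × Fin D → ℝ, A *ᵥ x = A *ᵥ xbar + v → l2norm (x - xbar) ≤ d →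
      J α xhat ≤ J α x) :
    l2norm (subVec (xhat - xbar) Tᶜ) ≤ 2 * Real.sqrt N * l2norm (pinvR A *ᵥ v) := by
  set e := pinvR A *ᵥ v
  have hdT : ∀ k ∈ T, d ≤ 1 / α ∧ d ≤ l2norm (blk xbar k) - 1 / α := fun k hk =>
    le_min_iff.1 (hd ▸ Finset.inf'_le _ hk)
  obtain ⟨k₀, hk₀⟩ := id hT
  have hblk (k : Fin N) : l2norm (blk (xhat - xbar) k) ≤ d := (l2norm_blk_le _ k).trans hball
  suffices hdev : ∑ k ∈ Tᶜ, l2norm (blk (xhat - xbar) k) ≤ 2 * √N * l2norm e from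
    (l2norm_subVec_le_sum _ _).trans hdev
  rcases lt_or_ge d (l2norm e) with he | he
  · calc _ ≤ √N * l2norm (xhat - xbar) := sum_l2norm_blk_le _ _
      _ ≤ √N * l2norm e := by gcongr; exact hball.trans he.le
      _ ≤ 2 * √N * l2norm e := by linarith [mul_nonneg (Real.sqrt_nonneg N) (l2norm_nonneg e)]
  have hAe : A *ᵥ e = v := by
    rw [mulVec_mulVec, mul_pinvR (hrow.trans (Fintype.card_fin m).symm), one_mulVec]
  have hJ : J α xhat ≤ J α (xbar + e) :=
    hmin _ (by rw [mulVec_add, hAe]) (by simpa using he)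
  have hon (k : Fin N) (hk : k ∈ T) : 1 / α ≤ l2norm (blk xhat k) := by
    have := l2norm_le_l2norm_add_l2norm_sub (blk xhat k) (blk xbar k)
    linarith [blk_sub xhat xbar k ▸ hblk k, (hdT k hk).2]
  calc _ ≤ 2 * ∑ k ∈ Tᶜ, l2norm (blk e k) :=
        sum_compl_blk_sub_le_of_J_le hα hsupp hon (fun k _ => (hblk k).trans (hdT k₀ hk₀).1) hJ
    _ ≤ 2 * (√N * l2norm e) := by gcongr; exact sum_l2norm_blk_le e _
    _ = 2 * √N * l2norm e := by ring

/-- The off-support deviation of the minimizer of the BZAP cost function over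
`L ∩ B(x̄, d)` satisfies `‖x̂_{Tᶜ} − x̄_{Tᶜ}‖ ≤ 2√N ‖A† v‖`. -/
theorem offsupport_deviation {m N D : ℕ} (A : Matrix (Fin m) (Fin N × Fin D) ℝ)
    (xbar xhat : Fin N × Fin D → ℝ) (v : Fin m → ℝ) (T : Finset (Fin N)) (hT : T.Nonempty)
    (α : ℝ) (hα : 0 < α)
    (hsupp : ∀ k ∉ T, blk xbar k = 0)
    (hrow : A.rank = m)
    (halpha : ∀ k ∈ T, 1 / α < l2norm (blk xbar k))
    (d : ℝ) (hd : d = T.inf' hT fun k => min (1 / α) (l2norm (blk xbar k) - 1 / α))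
    (hfeas : A *ᵥ xhat = A *ᵥ xbar + v)
    (hball : l2norm (xhat - xbar) ≤ d)
    (hmin : ∀ x : Fin N × Fin D → ℝ, A *ᵥ x = A *ᵥ xbar + v → l2norm (x - xbar) ≤ d →
      J α xhat ≤ J α x) :
    l2norm (subVec (xhat - xbar) Tᶜ) ≤ 2 * Real.sqrt N * l2norm (pinvR A *ᵥ v) :=
  offsupport_deviation_general A xbar xhat v T hT α hα hsupp hrow d hd hball hmin
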